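/- arXiv:1603.03892 — 4 statements merged into one kernel-verified Lean document; each statement's English description precedes it below -/
import Mathlib

section
/- Let (G, τ) be a locally quasi-convex Hausdorff topological abelian group of finite exponent (i.e., mG = 0 for some positive integer m). Then τ is a linear topology: it admits a neighborhood basis at 0 consisting of open subgroups. -/
open scoped Topology
open Filter

noncomputable section

abbrev Circle1 : Type := AddCircle (1 : ℝ)

def Tpos : Set Circle1 := (fun r : ℝ => (r : Circle1)) '' Set.Icc (-(1/4) : ℝ) (1/4)

variable {G : Type*}

def IsChar [AddCommGroup G] (τ : TopologicalSpace G) (φ : G →+ Circle1) : Prop :=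
  @Continuous G Circle1 τ _ φ

def QuasiConvex [AddCommGroup G] (τ : TopologicalSpace G) (M : Set G) : Prop :=
  ∀ x ∉ M, ∃ φ : G →+ Circle1, IsChar τ φ ∧ (∀ y ∈ M, φ y ∈ Tpos) ∧ φ x ∉ Tpos

def LocallyQuasiConvex [AddCommGroup G] (τ : TopologicalSpace G) : Prop :=
  ∀ U ∈ @nhds G τ 0, ∃ M ∈ @nhds G τ 0, QuasiConvex τ M ∧ M ⊆ U

def Compatible [AddCommGroup G] (τ τ' : TopologicalSpace G) : Prop :=
  ∀ φ : G →+ Circle1, IsChar τ φ ↔ IsChar τ' φ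

def IsMackey [AddCommGroup G] (τ : TopologicalSpace G) : Prop :=
  @IsTopologicalAddGroup G τ _ ∧ LocallyQuasiConvex τ ∧
    ∀ τ' : TopologicalSpace G, @IsTopologicalAddGroup G τ' _ →
      LocallyQuasiConvex τ' → Compatible τ τ' → τ ≤ τ'

def BoundedGroup (G : Type*) [AddCommGroup G] : Prop :=
  ∃ m : ℕ, 0 < m ∧ ∀ x : G, m • x = 0

def Precompact [AddCommGroup G] (τ : TopologicalSpace G) : Prop :=
  ∀ U ∈ @nhds G τ 0, ∃ F : Finset G, ∀ x : G, ∃ f ∈ F, x - f ∈ U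

def LinearTop [AddCommGroup G] (τ : TopologicalSpace G) : Prop :=
  ∀ U ∈ @nhds G τ 0, ∃ H : AddSubgroup G, @IsOpen G τ (H : Set G) ∧ (H : Set G) ⊆ U

def DuallyClosed [AddCommGroup G] (τ : TopologicalSpace G) (H : AddSubgroup G) : Prop :=
  ∀ x : G, x ∉ H → ∃ φ : G →+ Circle1, IsChar τ φ ∧ (∀ h ∈ H, φ h = 0) ∧ φ x ≠ 0

def WeakTop [AddCommGroup G] (τ : TopologicalSpace G) : TopologicalSpace G :=
  ⨅ φ : {φ : G →+ Circle1 // IsChar τ φ}, TopologicalSpace.induced φ.1 inferInstance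

/-! If `M` is a quasi-convex neighbourhood of `0`, the subgroup `kerPolar τ M` of points killed by
every continuous character mapping `M` into `T₊` lies inside `M`. When `mG = 0`, the points all of
whose multiples lie in `M` form a neighbourhood of `0` (only the multiples `k • x`, `k < m`, matter),
and they belong to `kerPolar τ M` because `T₊` contains no nontrivial subgroup of the circle:
repeated doubling pushes any `t` with `0 < ‖t‖ ≤ 1/4` out of `T₊`. Hence `kerPolar τ M` is an
open subgroup contained in `M`. -/

namespace AddCircle

lemma exists_coe_eq_and_abs_eq_norm (t : AddCircle (1 : ℝ)) :
    ∃ s : ℝ, (s : AddCircle (1 : ℝ)) = t ∧ |s| = ‖t‖ := by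
  induction t using QuotientAddGroup.induction_on with
  | H x => exact ⟨x - round x, by simp, by simp [AddCircle.norm_eq]⟩

lemma norm_coe_of_abs_le_half {s : ℝ} (hs : |s| ≤ 1 / 2) : ‖(s : AddCircle (1 : ℝ))‖ = |s| :=
  (norm_coe_eq_abs_iff (p := 1) one_ne_zero).2 (by simpa using hs)

lemma norm_two_nsmul {t : AddCircle (1 : ℝ)} (ht : ‖t‖ ≤ 1 / 4) : ‖2 • t‖ = 2 * ‖t‖ := by
  obtain ⟨s, rfl, hs⟩ := exists_coe_eq_and_abs_eq_norm t
  rw [← coe_nsmul, nsmul_eq_mul, norm_coe_of_abs_le_half] <;>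
    simp only [Nat.cast_ofNat, abs_mul, abs_two, hs]
  linarith

lemma eq_zero_of_forall_norm_two_pow_nsmul_le {t : AddCircle (1 : ℝ)}
    (h : ∀ j : ℕ, ‖2 ^ j • t‖ ≤ 1 / 4) : t = 0 := by
  have hpow : ∀ j : ℕ, ‖2 ^ j • t‖ = 2 ^ j * ‖t‖ := by
    intro j
    induction j with
    | zero => simp
    | succ j ih => rw [pow_succ, mul_nsmul, norm_two_nsmul (h j), ih]; ring
  by_contra ht
  obtain ⟨j, hj⟩ := pow_unbounded_of_one_lt (1 / 4 / ‖t‖) one_lt_two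
  have := h j
  rw [hpow, ← le_div_iff₀ (norm_pos_iff.2 ht)] at this
  linarith

end AddCircle

lemma norm_le_of_mem_Tpos {t : Circle1} (ht : t ∈ Tpos) : ‖t‖ ≤ 1 / 4 := by
  obtain ⟨s, hs, rfl⟩ := ht
  have hs' : |s| ≤ 1 / 4 := abs_le.2 hs
  rwa [AddCircle.norm_coe_of_abs_le_half (by linarith)]

lemma eq_zero_of_forall_nsmul_mem_Tpos {t : Circle1} (h : ∀ k : ℕ, k • t ∈ Tpos) : t = 0 :=
  AddCircle.eq_zero_of_forall_norm_two_pow_nsmul_le fun j => norm_le_of_mem_Tpos (h (2 ^ j))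

section

variable [AddCommGroup G]

def kerPolar (τ : TopologicalSpace G) (M : Set G) : AddSubgroup G where
  carrier := {x | ∀ φ : G →+ Circle1, IsChar τ φ → (∀ y ∈ M, φ y ∈ Tpos) → φ x = 0}
  zero_mem' φ _ _ := map_zero φ
  add_mem' hx hy φ hφ hφM := by rw [map_add, hx φ hφ hφM, hy φ hφ hφM, add_zero]
  neg_mem' hx φ hφ hφM := by rw [map_neg, hx φ hφ hφM, neg_zero]

lemma QuasiConvex.kerPolar_subset {τ : TopologicalSpace G} {M : Set G} (hM : QuasiConvex τ M) :
    (kerPolar τ M : Set G) ⊆ M := by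
  intro x hx
  by_contra hxM
  obtain ⟨φ, hφ, hφM, hφx⟩ := hM x hxM
  exact hφx (hx φ hφ hφM ▸ ⟨0, by norm_num, by simp⟩)

lemma mem_kerPolar_of_forall_nsmul_mem {τ : TopologicalSpace G} {M : Set G} {x : G}
    (hx : ∀ k : ℕ, k • x ∈ M) : x ∈ kerPolar τ M := fun φ _ hφM =>
  eq_zero_of_forall_nsmul_mem_Tpos fun k => map_nsmul φ k x ▸ hφM _ (hx k)

lemma setOf_forall_nsmul_mem_mem_nhds [TopologicalSpace G] [ContinuousAdd G] {m : ℕ}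
    (hm : 0 < m) (hmG : ∀ x : G, m • x = 0) {M : Set G} (hM : M ∈ 𝓝 (0 : G)) :
    {x : G | ∀ k : ℕ, k • x ∈ M} ∈ 𝓝 (0 : G) := by
  have hk : ∀ k : ℕ, (k • · : G → G) ⁻¹' M ∈ 𝓝 (0 : G) := fun k =>
    (continuous_nsmul k).continuousAt.preimage_mem_nhds (by simpa using hM)
  refine mem_of_superset ((biInter_finset_mem (Finset.range m)).2 fun k _ => hk k) ?_
  intro x hx k
  have hred : k • x = (k % m) • x := by
    conv_lhs => rw [← Nat.mod_add_div k m, add_nsmul, mul_nsmul', hmG, add_zero]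
  exact hred ▸ Set.mem_iInter₂.1 hx (k % m) (Finset.mem_range.2 (Nat.mod_lt k hm))

end

theorem stmt0_general {G : Type*} [AddCommGroup G] (τ : TopologicalSpace G)
    (htg : @IsTopologicalAddGroup G τ _)
    (hb : BoundedGroup G) (hlqc : LocallyQuasiConvex τ) : LinearTop τ := by
  obtain ⟨m, hm, hmG⟩ := hb
  intro U hU
  obtain ⟨M, hM, hqc, hMU⟩ := hlqc U hU
  have hnhds : (kerPolar τ M : Set G) ∈ 𝓝 0 :=
    mem_of_superset (setOf_forall_nsmul_mem_mem_nhds hm hmG hM) fun _ =>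
      mem_kerPolar_of_forall_nsmul_mem
  exact ⟨kerPolar τ M, AddSubgroup.isOpen_of_mem_nhds _ hnhds, hqc.kerPolar_subset.trans hMU⟩

theorem stmt0 {G : Type*} [AddCommGroup G] (τ : TopologicalSpace G)
    (htg : @IsTopologicalAddGroup G τ _) (hT2 : @T2Space G τ)
    (hb : BoundedGroup G) (hlqc : LocallyQuasiConvex τ) : LinearTop τ :=
  stmt0_general τ htg hb hlqc
end
end

section
/- Let (G, τ) be a metrizable, non-discrete, torsion topological abelian group. Then there exists a group homomorphism f : G → ℝ/ℤ which is not continuous. -/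
open scoped Topology
open Filter

noncomputable section

variable {G : Type*}

/-!
Choose `xₙ → 0` with `xₙ` outside the subgroup generated by `x₀, …, xₙ₋₁`, which is finite because
`G` is torsion. Since `ℝ/ℤ` is divisible, a character can be changed by one vanishing on that
subgroup so as to move its value at `xₙ` to norm `≥ 1/4`; thus for every `n` some character is
far from `0` at `x₀, …, xₙ₋₁`, and compactness of `Hom(G, ℝ/ℤ)` for pointwise convergence gives
one character `f` with `‖f xₙ‖ ≥ 1/4` for all `n`. Such an `f` is not continuous.
-/

namespace AddCircle

variable {p : ℝ}

lemma le_norm_coe_of_mem_Icc (hp : 0 < p) {u : ℝ} (hu : u ∈ Set.Icc (p / 4) (3 * p / 4)) :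
    p / 4 ≤ ‖(u : AddCircle p)‖ := by
  obtain ⟨hu₁, hu₂⟩ := hu
  rcases le_total u (p / 2) with h | h
  · rw [(norm_coe_eq_abs_iff p hp.ne').2
      (by rw [abs_of_pos hp, abs_of_pos (by linarith)]; exact h), abs_of_pos (by linarith)]
    exact hu₁
  · have hsub : (u : AddCircle p) = ((u - p : ℝ) : AddCircle p) := by
      rw [coe_sub, coe_period, sub_zero]
    rw [hsub, (norm_coe_eq_abs_iff p hp.ne').2
      (by rw [abs_of_pos hp, abs_of_neg (by linarith)]; linarith), abs_of_neg (by linarith)]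
    linarith

lemma exists_nsmul_eq_zero_le_norm_add (hp : 0 < p) (c : AddCircle p) {d : ℕ} (hd : 2 ≤ d) :
    ∃ s : AddCircle p, d • s = 0 ∧ p / 4 ≤ ‖c + s‖ := by
  obtain ⟨r, rfl⟩ := QuotientAddGroup.mk_surjective c
  have hd₀ : (0 : ℝ) < d := by positivity
  have hd₂ : (2 : ℝ) ≤ d := by exact_mod_cast hd
  -- the `d`-torsion points `k * p / d` are `p / d ≤ p / 2` apart, so one of them moves `r`
  -- into `[p / 4, 3p / 4]`
  set k : ℤ := ⌈d / 4 - d * r / p⌉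
  have hk₁ : d / 4 - d * r / p ≤ k := Int.le_ceil _
  have hk₂ : (k : ℝ) < d / 4 - d * r / p + 1 := Int.ceil_lt_add_one _
  refine ⟨((k * p / d : ℝ) : AddCircle p), ?_, ?_⟩
  · rw [← coe_nsmul, coe_eq_zero_iff]
    refine ⟨k, ?_⟩
    rw [nsmul_eq_mul, zsmul_eq_mul]
    field_simp
  · rw [← coe_add]
    apply le_norm_coe_of_mem_Icc hp
    have hpd : 0 < p / d := by positivity
    have h₁ := mul_le_mul_of_nonneg_right hk₁ hpd.le
    have h₂ := mul_lt_mul_of_pos_right hk₂ hpd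
    constructor
    · field_simp at h₁ ⊢
      linarith
    · field_simp at h₂ ⊢
      linarith [mul_le_mul_of_nonneg_left hd₂ hp.le]

end AddCircle

namespace AddMonoidHom

variable {M A D : Type*} [AddCommGroup M] [AddCommGroup A] [AddCommGroup D] [DivisibleBy D ℤ]

lemma exists_comp_eq_of_ker_le (e : M →+ A) (m : M →+ D) (h : e.ker ≤ m.ker) :
    ∃ g : A →+ D, g.comp e = m := by
  let ψ : e.range →+ D := (QuotientAddGroup.lift e.ker m h).comp
    (QuotientAddGroup.quotientKerEquivRange e).symm.toAddMonoidHom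
  obtain ⟨g, hg⟩ := (Module.Baer.of_divisible D).extension_property_addMonoidHom
    e.range.subtype Subtype.val_injective ψ
  refine ⟨g, ext fun x => ?_⟩
  have hψ : (QuotientAddGroup.quotientKerEquivRange e).symm (e.rangeRestrict x) = x :=
    (AddEquiv.symm_apply_eq _).2 rfl
  calc g (e x) = ψ (e.rangeRestrict x) := DFunLike.congr_fun hg (e.rangeRestrict x)
    _ = m x := by simp only [ψ, comp_apply, AddEquiv.coe_toAddMonoidHom, hψ]; rfl

lemma exists_apply_eq_of_addOrderOf_nsmul_eq_zero (a : A) {s : D} (hs : addOrderOf a • s = 0) :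
    ∃ χ : A →+ D, χ a = s := by
  have hker : (zmultiplesHom A a).ker ≤ (zmultiplesHom D s).ker := by
    intro n hn
    obtain ⟨k, rfl⟩ := addOrderOf_dvd_iff_zsmul_eq_zero.2 hn
    simp [mem_ker, mul_comm _ k, mul_zsmul, hs]
  obtain ⟨χ, hχ⟩ := exists_comp_eq_of_ker_le _ _ hker
  exact ⟨χ, by simpa using DFunLike.congr_fun hχ 1⟩

end AddMonoidHom

lemma exists_addMonoidHom_eq_zero_on_quarter_le_norm_add [AddCommGroup G] {K : AddSubgroup G}
    {x : G} (hx : x ∉ K) (hfin : IsOfFinAddOrder x) (c : Circle1) :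
    ∃ g : G →+ Circle1, (∀ k ∈ K, g k = 0) ∧ 1 / 4 ≤ ‖c + g x‖ := by
  set x' : G ⧸ K := (x : G ⧸ K)
  have hd : 2 ≤ addOrderOf x' := by
    have h₀ : 0 < addOrderOf x' :=
      ((QuotientAddGroup.mk' K).isOfFinAddOrder hfin).addOrderOf_pos
    have h₁ : addOrderOf x' ≠ 1 := by
      rw [Ne, AddMonoid.addOrderOf_eq_one_iff, QuotientAddGroup.eq_zero_iff]
      exact hx
    omega
  obtain ⟨s, hs, hcs⟩ := AddCircle.exists_nsmul_eq_zero_le_norm_add one_pos c hd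
  obtain ⟨χ, hχ⟩ := AddMonoidHom.exists_apply_eq_of_addOrderOf_nsmul_eq_zero x' hs
  refine ⟨χ.comp (QuotientAddGroup.mk' K), fun k hk => ?_, ?_⟩
  · simp [(QuotientAddGroup.eq_zero_iff k).2 hk]
  · simpa [x', hχ] using hcs

lemma exists_addMonoidHom_forall_mem_of_forall_lt {M T : Type*} [AddZeroClass M] [AddMonoid T]
    [TopologicalSpace T] [CompactSpace T] [T2Space T] [ContinuousAdd T]
    (x : ℕ → M) {F : Set T} (hF : IsClosed F) (h : ∀ n, ∃ f : M →+ T, ∀ i < n, f (x i) ∈ F) :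
    ∃ f : M →+ T, ∀ i, f (x i) ∈ F := by
  let t : ℕ → Set (M → T) := fun n =>
    Set.range ((↑) : (M →+ T) → M → T) ∩ ⋂ i ∈ Set.Iio n, (fun φ => φ (x i)) ⁻¹' F
  have ht : ∀ n, IsClosed (t n) := fun n =>
    (AddMonoidHom.isClosed_range_coe M T).inter <|
      isClosed_biInter fun i _ => hF.preimage (continuous_apply (x i))
  obtain ⟨φ, hφ⟩ := IsCompact.nonempty_iInter_of_sequence_nonempty_isCompact_isClosed t
    (fun n => Set.inter_subset_inter_right _ <| Set.biInter_mono
      (Set.Iio_subset_Iio n.le_succ) fun _ _ => subset_rfl)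
    (fun n => by
      obtain ⟨f, hf⟩ := h n
      exact ⟨f, ⟨f, rfl⟩, Set.mem_iInter₂.2 hf⟩)
    (ht 0).isCompact ht
  simp only [t, Set.mem_iInter, Set.mem_inter_iff] at hφ
  obtain ⟨f, rfl⟩ := (hφ 0).1
  exact ⟨f, fun i => (hφ (i + 1)).2 i (Nat.lt_succ_self i)⟩

lemma exists_seq_of_forall_finite_exists {α : Type*} (P : ℕ → Set α → α → Prop)
    (h : ∀ n (s : Set α), s.Finite → ∃ y, P n s y) :
    ∃ x : ℕ → α, ∀ n, P n (x '' Set.Iio n) (x n) := by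
  classical
  choose y hy using fun n (s : Finset α) => h n (↑s) s.finite_toSet
  let S : ℕ → Finset α := fun n =>
    Nat.rec (motive := fun _ => Finset α) ∅ (fun n s => insert (y n s) s) n
  have hS : ∀ n, ((S n : Finset α) : Set α) = (fun i => y i (S i)) '' Set.Iio n := by
    intro n
    induction n with
    | zero => simp [S]
    | succ n ih =>
      rw [Set.Iio_add_one_eq_Iic, ← Set.Iio_insert, Set.image_insert_eq, ← ih]
      simp [S]
  exact ⟨fun n => y n (S n), fun n => by rw [← hS n]; exact hy n (S n)⟩

lemma exists_addMonoidHom_forall_quarter_le_norm [AddCommGroup G] (x : ℕ → G)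
    (hfin : ∀ n, IsOfFinAddOrder (x n)) (hx : ∀ n, x n ∉ AddSubgroup.closure (x '' Set.Iio n)) :
    ∃ f : G →+ Circle1, ∀ n, 1 / 4 ≤ ‖f (x n)‖ := by
  refine exists_addMonoidHom_forall_mem_of_forall_lt x (F := {t | 1 / 4 ≤ ‖t‖})
    (isClosed_le continuous_const continuous_norm) fun n => ?_
  induction n with
  | zero => exact ⟨0, fun i hi => absurd hi i.not_lt_zero⟩
  | succ n ih =>
    obtain ⟨f, hf⟩ := ih
    obtain ⟨g, hgK, hg⟩ :=
      exists_addMonoidHom_eq_zero_on_quarter_le_norm_add (hx n) (hfin n) (f (x n))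
    refine ⟨f + g, fun i hi => ?_⟩
    rcases (Nat.lt_succ_iff_lt_or_eq.1 hi) with hi | rfl
    · have : g (x i) = 0 := hgK _ (AddSubgroup.subset_closure ⟨i, hi, rfl⟩)
      simpa [this] using hf i hi
    · exact hg

lemma IsAddTorsion.finite_addSubgroupClosure [AddCommGroup G] (hG : IsAddTorsion G) {s : Set G}
    (hs : s.Finite) : (AddSubgroup.closure s : Set G).Finite := by
  have : AddGroup.FG (AddSubgroup.closure s) :=
    AddGroup.fg_iff_addSubgroup_fg _ |>.2 ⟨hs.toFinset, by simp⟩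
  have := AddCommGroup.finite_of_fg_isAddTorsion (AddSubgroup.closure s) fun g =>
    AddSubmonoid.isOfFinAddOrder_coe.1 (hG g)
  exact Set.toFinite _

theorem stmt3 {G : Type*} [AddCommGroup G] (τ : TopologicalSpace G)
    (htg : @IsTopologicalAddGroup G τ _) (hmet : @TopologicalSpace.MetrizableSpace G τ)
    (hnd : τ ≠ ⊥) (htor : ∀ x : G, ∃ n : ℕ, 0 < n ∧ n • x = 0) :
    ∃ f : G →+ Circle1, ¬ @Continuous G Circle1 τ _ f := by
  let := τ
  have htors : IsAddTorsion G := fun x => isOfFinAddOrder_iff_nsmul_eq_zero.2 (htor x)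
  have hpunct : (𝓝[≠] (0 : G)).NeBot := by
    rw [neBot_iff, Ne, ← isOpen_singleton_iff_punctured_nhds]
    exact fun h => hnd (discreteTopology_iff_isOpen_singleton_zero.2 h).eq_bot
  obtain ⟨B, hB⟩ := (𝓝 (0 : G)).exists_antitone_basis
  obtain ⟨x, hx⟩ := exists_seq_of_forall_finite_exists
    (fun n s y => y ∈ B n ∧ y ∉ AddSubgroup.closure s) fun n s hs =>
      Filter.nonempty_of_mem <| Filter.inter_mem (mem_nhdsWithin_of_mem_nhds (hB.mem n)) <|
        nhdsNE_le_cofinite 0 (IsAddTorsion.finite_addSubgroupClosure htors hs).compl_mem_cofinite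
  obtain ⟨f, hf⟩ :=
    exists_addMonoidHom_forall_quarter_le_norm x (fun n => htors (x n)) fun n => (hx n).2
  refine ⟨f, fun hcont => ?_⟩
  have hlim : Tendsto (fun n => f (x n)) atTop (𝓝 0) := by
    have := (hcont.tendsto 0).comp (hB.tendsto fun n => (hx n).1)
    rwa [map_zero] at this
  obtain ⟨n, hn⟩ :=
    (hlim.eventually (Metric.ball_mem_nhds 0 (by norm_num : (0 : ℝ) < 1 / 4))).exists
  exact not_lt.2 (hf n) (by simpa using hn)
end
end

section
/- Let G be an abelian group of finite exponent and τ a metrizable locally quasi-convex group topology on G. Then τ is the Mackey topology: every locally quasi-convex group topology τ' on G having the same continuous characters as τ satisfies τ' ⊆ τ. -/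
open scoped Topology
open Filter

noncomputable section

variable {G : Type*}

/-!
Let `τ'` be locally quasi-convex and compatible with `τ`, and let `M` be a quasi-convex
`τ'`-neighbourhood of `0`. The annihilator `H` of the polar of `M` is a subgroup contained in `M`,
and since `G` has finite exponent `m` it contains the `τ'`-neighbourhood of `0` formed by the `z`
with `r • z ∈ M` for all `r < m`. So every character vanishing on `H` is `τ'`-continuous, hence
`τ`-continuous.

It remains to see that `H` is a `τ`-neighbourhood of `0`. Otherwise metrizability gives a sequence
`xₙ → 0` outside `H`, and extending characters along an increasing chain of finite subgroups of
`G ⧸ H` (possible since `ℝ/ℤ` is divisible) produces a character `χ` vanishing on `H` with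
`χ xₙ ≠ 0` infinitely often. But the `χ xₙ` are `m`-torsion points of `ℝ/ℤ` tending to `0`, and
the nonzero `m`-torsion points stay away from `0`.
-/

lemma zero_mem_Tpos : (0 : Circle1) ∈ Tpos :=
  ⟨0, by norm_num, by simp⟩

lemma coe_notMem_Tpos {t : ℝ} (h₁ : 1/4 < t) (h₂ : t < 3/4) : (t : Circle1) ∉ Tpos := by
  rintro ⟨s, ⟨hs₁, hs₂⟩, hst⟩
  simp only at hst
  obtain ⟨n, hn⟩ := (AddCircle.coe_eq_zero_iff (1 : ℝ)).mp
    (by rw [AddCircle.coe_sub, hst, sub_self] : ((t - s : ℝ) : Circle1) = 0)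
  rw [zsmul_one] at hn
  have h0 : (0 : ℝ) < n := by linarith
  have h1 : (n : ℝ) < 1 := by linarith
  norm_cast at h0 h1
  omega

lemma exists_nsmul_coe_notMem_Tpos {r : ℝ} (h₀ : 0 < r) (h₁ : r ≤ 1/2) :
    ∃ k : ℕ, k • (r : Circle1) ∉ Tpos := by
  -- the first multiple of `r` beyond `1/4` overshoots it by at most `r`
  set F := ⌊1 / (4 * r)⌋₊
  refine ⟨F + 1, ?_⟩
  rw [← AddCircle.coe_nsmul, nsmul_eq_mul]
  have hlt : 1 / (4 * r) < F + 1 := Nat.lt_floor_add_one _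
  have hle : (F : ℝ) * r ≤ 1/4 := by
    have := Nat.floor_le (by positivity : 0 ≤ 1 / (4 * r))
    rw [le_div_iff₀ (by positivity)] at this
    linarith
  rw [div_lt_iff₀ (by positivity)] at hlt
  refine coe_notMem_Tpos (by push_cast; linarith) ?_
  rcases Nat.eq_zero_or_pos F with hF | hF
  · simp [hF]; linarith
  · have : (1 : ℝ) ≤ F := by exact_mod_cast hF
    push_cast; nlinarith

lemma eq_zero_of_forall_zsmul_mem_Tpos {c : Circle1} (h : ∀ j : ℤ, j • c ∈ Tpos) : c = 0 := by
  obtain ⟨r, hr, rfl⟩ : ∃ r : ℝ, |r| ≤ 1/2 ∧ (r : Circle1) = c := by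
    obtain ⟨s, rfl⟩ := QuotientAddGroup.mk_surjective c
    refine ⟨s - round s, abs_sub_round s, ?_⟩
    rw [AddCircle.coe_sub, sub_eq_self, AddCircle.coe_eq_zero_iff]
    exact ⟨round s, zsmul_one _⟩
  rcases lt_trichotomy r 0 with hneg | rfl | hpos
  · obtain ⟨k, hk⟩ := exists_nsmul_coe_notMem_Tpos (neg_pos.mpr hneg) (by linarith [neg_abs_le r])
    refine absurd (h (-k)) ?_
    rwa [neg_zsmul, natCast_zsmul, ← smul_neg, ← AddCircle.coe_neg]
  · simp
  · obtain ⟨k, hk⟩ := exists_nsmul_coe_notMem_Tpos hpos (by linarith [le_abs_self r])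
    exact absurd (h k) (by rwa [natCast_zsmul])

lemma AddCircle.eventually_eq_zero_of_nsmul_eq_zero {p : ℝ} [Fact (0 < p)] {m : ℕ} (hm : 0 < m) :
    ∀ᶠ c in 𝓝 (0 : AddCircle p), m • c = 0 → c = 0 := by
  have hclosed : IsClosed ({c : AddCircle p | m • c = 0} \ {0}) :=
    ((AddCircle.finite_torsion p hm).sdiff).isClosed
  filter_upwards [hclosed.isOpen_compl.mem_nhds (by simp)] with c hc hmc
  by_contra hc0
  exact hc ⟨hmc, hc0⟩

section Characters

variable [AddCommGroup G]

def ratCircleToCircle1 : AddCircle (1 : ℚ) →+ Circle1 :=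
  QuotientAddGroup.map _ _ (Rat.castHom ℝ).toAddMonoidHom <| by
    rintro _ ⟨n, rfl⟩
    exact ⟨n, by simp⟩

lemma ratCircleToCircle1_injective : Function.Injective ratCircleToCircle1 := by
  refine (injective_iff_map_eq_zero _).mpr fun x hx => ?_
  obtain ⟨q, rfl⟩ := QuotientAddGroup.mk_surjective x
  obtain ⟨n, hn⟩ := (AddCircle.coe_eq_zero_iff (1 : ℝ)).mp hx
  have hq : ((n : ℚ) : ℝ) = q := by simpa using hn
  exact (AddCircle.coe_eq_zero_iff (1 : ℚ)).mpr ⟨n, by rw [zsmul_one]; exact_mod_cast hq⟩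

lemma exists_char_apply_ne_zero {a : G} (ha : a ≠ 0) : ∃ θ : G →+ Circle1, θ a ≠ 0 := by
  obtain ⟨c, hc⟩ := CharacterModule.exists_character_apply_ne_zero_of_ne_zero ha
  exact ⟨ratCircleToCircle1.comp c, (map_ne_zero_iff _ ratCircleToCircle1_injective).mpr hc⟩

lemma exists_char_vanishing_apply_ne_zero {S : AddSubgroup G} {a : G} (ha : a ∉ S) :
    ∃ θ : G →+ Circle1, (∀ g ∈ S, θ g = 0) ∧ θ a ≠ 0 := by
  obtain ⟨θ, hθ⟩ := exists_char_apply_ne_zero (mt (QuotientAddGroup.eq_zero_iff a).mp ha)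
  exact ⟨θ.comp (QuotientAddGroup.mk' S),
    fun g hg => by simp [(QuotientAddGroup.eq_zero_iff g).mpr hg], hθ⟩

lemma exists_char_extension (S : AddSubgroup G) (f : S →+ Circle1) :
    ∃ χ : G →+ Circle1, ∀ g : S, χ g = f g := by
  obtain ⟨χ, hχ⟩ := (Module.Baer.of_divisible Circle1).extension_property_addMonoidHom
    S.subtype Subtype.coe_injective f
  exact ⟨χ, fun g => congr($hχ g)⟩

lemma exists_char_eq_on_chain {S : ℕ → AddSubgroup G} (hS : Monotone S) (ψ : ℕ → G →+ Circle1)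
    (hψ : ∀ k, ∀ g ∈ S k, ψ (k + 1) g = ψ k g) :
    ∃ χ : G →+ Circle1, ∀ k, ∀ g ∈ S k, χ g = ψ k g := by
  have hstable : ∀ {k l}, k ≤ l → ∀ g ∈ S k, ψ l g = ψ k g := by
    intro k l hkl
    induction l, hkl using Nat.le_induction with
    | base => exact fun _ _ => rfl
    | succ l hkl ih => exact fun g hg => (hψ l g (hS hkl hg)).trans (ih g hg)
  have hdir : Directed (· ≤ ·) S := hS.directed_le
  choose idx hidx using fun g : ↥(⨆ k, S k) => (AddSubgroup.mem_iSup_of_directed hdir).mp g.2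
  have hval : ∀ (g : ↥(⨆ k, S k)) k, (g : G) ∈ S k → ψ (idx g) g = ψ k g := fun g k hk => by
    rw [← hstable (le_max_left (idx g) k) _ (hidx g), hstable (le_max_right _ k) _ hk]
  let f : ↥(⨆ k, S k) →+ Circle1 := AddMonoidHom.mk' (fun g => ψ (idx g) g) fun g h => by
    obtain ⟨l, hgl, hhl⟩ := hdir (idx g) (idx h)
    have hg := hgl (hidx g)
    have hh := hhl (hidx h)
    rw [hval g l hg, hval h l hh, hval (g + h) l (add_mem hg hh), AddSubgroup.coe_add, map_add]
  obtain ⟨χ, hχ⟩ := exists_char_extension _ f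
  exact ⟨χ, fun k g hg => (hχ ⟨g, AddSubgroup.mem_iSup_of_mem k hg⟩).trans (hval _ k hg)⟩

lemma exists_char_eq_on_apply_ne_zero (ψ : G →+ Circle1) (S : AddSubgroup G) (y : G) :
    ∃ ψ' : G →+ Circle1, (∀ g ∈ S, ψ' g = ψ g) ∧ (y ∉ S → ψ' y ≠ 0) := by
  by_cases hy : y ∈ S
  · exact ⟨ψ, fun _ _ => rfl, absurd hy⟩
  by_cases hψ : ψ y = 0
  · obtain ⟨θ, hθS, hθy⟩ := exists_char_vanishing_apply_ne_zero hy
    exact ⟨ψ + θ, fun g hg => by simp [hθS g hg], fun _ => by simpa [hψ] using hθy⟩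
  · exact ⟨ψ, fun _ _ => rfl, fun _ => hψ⟩

lemma exists_char_apply_ne_zero_of_notMem_chain {S : ℕ → AddSubgroup G} (hS : Monotone S)
    {y : ℕ → G} (hy : ∀ k, y k ∈ S (k + 1)) :
    ∃ χ : G →+ Circle1, ∀ k, y k ∉ S k → χ (y k) ≠ 0 := by
  choose next hnext_eq hnext_ne using
    fun k (ψ : G →+ Circle1) => exists_char_eq_on_apply_ne_zero ψ (S k) (y k)
  let ψ : ℕ → G →+ Circle1 := fun k => Nat.rec 0 next k
  obtain ⟨χ, hχ⟩ := exists_char_eq_on_chain hS ψ fun k => hnext_eq k (ψ k)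
  exact ⟨χ, fun k hk => by rw [hχ (k + 1) _ (hy k)]; exact hnext_ne k (ψ k) hk⟩

lemma BoundedGroup.quotient (hb : BoundedGroup G) (H : AddSubgroup G) : BoundedGroup (G ⧸ H) := by
  obtain ⟨m, hm, hmG⟩ := hb
  refine ⟨m, hm, fun x => ?_⟩
  obtain ⟨g, rfl⟩ := QuotientAddGroup.mk_surjective x
  rw [← QuotientAddGroup.mk_nsmul, hmG, QuotientAddGroup.mk_zero]

lemma BoundedGroup.finite_closure (hb : BoundedGroup G) {s : Set G} (hs : s.Finite) :
    (AddSubgroup.closure s : Set G).Finite := by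
  obtain ⟨m, hm, hmG⟩ := hb
  have : Finite s := hs
  have htors : IsAddTorsion (AddSubgroup.closure s) := fun g =>
    isOfFinAddOrder_iff_nsmul_eq_zero.mpr ⟨m, hm, Subtype.ext (hmG g)⟩
  have := AddCommGroup.finite_of_fg_isAddTorsion _ htors
  exact Set.toFinite _

lemma BoundedGroup.infinite_setOf_notMem_closure (hb : BoundedGroup G) {y : ℕ → G}
    (hy : ∀ a, (y ⁻¹' {a}).Finite) :
    {k | y k ∉ AddSubgroup.closure (y '' Set.Iio k)}.Infinite := by
  intro hfin
  obtain ⟨K, hK⟩ := hfin.bddAbove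
  have hmem : ∀ n, y n ∈ AddSubgroup.closure (y '' Set.Iic K) := by
    intro n
    induction n using Nat.strong_induction_on with
    | _ n ih =>
      by_cases hn : n ≤ K
      · exact AddSubgroup.subset_closure ⟨n, hn, rfl⟩
      · have hclosure :
            AddSubgroup.closure (y '' Set.Iio n) ≤ AddSubgroup.closure (y '' Set.Iic K) :=
          (AddSubgroup.closure_le _).mpr (Set.image_subset_iff.mpr ih)
        exact hclosure (not_not.mp fun h => hn (hK h))
  exact Set.infinite_univ <| ((hb.finite_closure ((Set.finite_Iic K).image y)).preimage'
    fun a _ => hy a).subset fun n _ => hmem n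

lemma BoundedGroup.exists_char_frequently_apply_ne_zero (hb : BoundedGroup G) {y : ℕ → G}
    (hy : ∀ n, y n ≠ 0) : ∃ χ : G →+ Circle1, ∃ᶠ n in atTop, χ (y n) ≠ 0 := by
  by_cases hfib : ∀ a, (y ⁻¹' {a}).Finite
  · obtain ⟨χ, hχ⟩ := exists_char_apply_ne_zero_of_notMem_chain
      (S := fun k => AddSubgroup.closure (y '' Set.Iio k))
      (fun k l hkl => AddSubgroup.closure_mono (Set.image_mono (Set.Iio_subset_Iio hkl)))
      (fun k => AddSubgroup.subset_closure ⟨k, Nat.lt_succ_self k, rfl⟩)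
    exact ⟨χ, (Nat.frequently_atTop_iff_infinite.mpr
      (hb.infinite_setOf_notMem_closure hfib)).mono hχ⟩
  · obtain ⟨a, ha : (y ⁻¹' {a}).Infinite⟩ := not_forall.mp hfib
    obtain ⟨n, rfl⟩ := ha.nonempty
    obtain ⟨χ, hχ⟩ := exists_char_apply_ne_zero (hy n)
    exact ⟨χ, (Nat.frequently_atTop_iff_infinite.mpr ha).mono fun k hk => by rwa [hk]⟩

lemma BoundedGroup.exists_char_vanishing_frequently_apply_ne_zero (hb : BoundedGroup G)
    (H : AddSubgroup G) {x : ℕ → G} (hx : ∀ n, x n ∉ H) :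
    ∃ χ : G →+ Circle1, (∀ h ∈ H, χ h = 0) ∧ ∃ᶠ n in atTop, χ (x n) ≠ 0 := by
  obtain ⟨ψ, hψ⟩ := (hb.quotient H).exists_char_frequently_apply_ne_zero
    (y := fun n => (x n : G ⧸ H)) fun n => mt (QuotientAddGroup.eq_zero_iff _).mp (hx n)
  exact ⟨ψ.comp (QuotientAddGroup.mk' H),
    fun h hh => by simp [(QuotientAddGroup.eq_zero_iff h).mpr hh], hψ⟩

end Characters

section Topology

variable [AddCommGroup G]

lemma BoundedGroup.mem_nhds_zero_of_forall_isChar [t : TopologicalSpace G]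
    [FirstCountableTopology G] (hb : BoundedGroup G) {H : AddSubgroup G}
    (hH : ∀ χ : G →+ Circle1, (∀ h ∈ H, χ h = 0) → IsChar t χ) : (H : Set G) ∈ 𝓝 0 := by
  by_contra hH0
  obtain ⟨x, hx0, hxH⟩ := exists_seq_forall_of_frequently (not_eventually.mp hH0)
  obtain ⟨χ, hχH, hχx⟩ := hb.exists_char_vanishing_frequently_apply_ne_zero H hxH
  have hlim : Tendsto (fun n => χ (x n)) atTop (𝓝 0) :=
    map_zero χ ▸ ((hH χ hχH).tendsto 0).comp hx0
  obtain ⟨m, hm, hmG⟩ := hb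
  refine hχx ((hlim.eventually (AddCircle.eventually_eq_zero_of_nsmul_eq_zero hm)).mono
    fun n hn => not_not.mpr (hn ?_))
  rw [← map_nsmul, hmG, map_zero]

def polarAnnihilator (τ : TopologicalSpace G) (M : Set G) : AddSubgroup G :=
  ⨅ (φ : G →+ Circle1) (_ : IsChar τ φ ∧ ∀ y ∈ M, φ y ∈ Tpos), φ.ker

lemma mem_polarAnnihilator {τ : TopologicalSpace G} {M : Set G} {z : G} :
    z ∈ polarAnnihilator τ M ↔
      ∀ φ : G →+ Circle1, IsChar τ φ → (∀ y ∈ M, φ y ∈ Tpos) → φ z = 0 := by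
  simp [polarAnnihilator, AddSubgroup.mem_iInf]

lemma QuasiConvex.polarAnnihilator_subset {τ : TopologicalSpace G} {M : Set G}
    (hM : QuasiConvex τ M) : (polarAnnihilator τ M : Set G) ⊆ M := by
  intro z hz
  by_contra hzM
  obtain ⟨φ, hφ, hφM, hφz⟩ := hM z hzM
  exact hφz (by rw [mem_polarAnnihilator.mp hz φ hφ hφM]; exact zero_mem_Tpos)

lemma BoundedGroup.polarAnnihilator_mem_nhds [t : TopologicalSpace G] [IsTopologicalAddGroup G]
    (hb : BoundedGroup G) {M : Set G} (hM : M ∈ 𝓝 (0 : G)) :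
    (polarAnnihilator t M : Set G) ∈ 𝓝 (0 : G) := by
  obtain ⟨m, hm, hmG⟩ := hb
  have hpre : ∀ r ∈ Set.Ico (0 : ℤ) m, (r • · : G → G) ⁻¹' M ∈ 𝓝 (0 : G) := fun r _ =>
    (continuous_zsmul r).continuousAt.preimage_mem_nhds (by rwa [smul_zero])
  refine mem_of_superset ((biInter_mem (Set.finite_Ico (0 : ℤ) m)).mpr hpre) fun z hz => ?_
  refine mem_polarAnnihilator.mpr fun φ _ hφM => eq_zero_of_forall_zsmul_mem_Tpos fun j => ?_
  have hj : j • z = (j % m) • z := by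
    conv_lhs => rw [← Int.emod_add_mul_ediv j m]
    rw [add_zsmul, mul_comm, mul_zsmul, natCast_zsmul, hmG, zsmul_zero, add_zero]
  rw [← map_zsmul, hj]
  exact hφM _ (Set.mem_iInter₂.mp hz (j % m)
    ⟨Int.emod_nonneg _ (by omega), Int.emod_lt_of_pos _ (by omega)⟩)

lemma AddMonoidHom.continuous_of_ker_mem_nhds [TopologicalSpace G] [IsTopologicalAddGroup G]
    {A : Type*} [AddGroup A] [TopologicalSpace A] [ContinuousAdd A] (φ : G →+ A)
    (h : (φ.ker : Set G) ∈ 𝓝 0) : Continuous φ :=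
  continuous_of_continuousAt_zero φ <| tendsto_const_nhds.congr' <|
    mem_of_superset h fun g hg => by simp_all

lemma le_of_nhds_zero_le {τ τ' : TopologicalSpace G} (hτ : @IsTopologicalAddGroup G τ _)
    (hτ' : @IsTopologicalAddGroup G τ' _) (h : @nhds G τ 0 ≤ @nhds G τ' 0) : τ ≤ τ' :=
  (le_iff_nhds τ τ').mpr fun x => by
    rw [← @nhds_translation_add_neg G τ _ _ x, ← @nhds_translation_add_neg G τ' _ _ x]
    exact comap_mono h

end Topology

theorem stmt5_general {G : Type*} [AddCommGroup G] (hb : BoundedGroup G) (τ : TopologicalSpace G)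
    (htg : @IsTopologicalAddGroup G τ _) (hmet : @TopologicalSpace.MetrizableSpace G τ) :
    ∀ τ' : TopologicalSpace G, @IsTopologicalAddGroup G τ' _ → LocallyQuasiConvex τ' →
      Compatible τ τ' → τ ≤ τ' := by
  intro τ' htg' hlqc' hcomp
  refine le_of_nhds_zero_le htg htg' fun U hU => ?_
  obtain ⟨M, hM, hMqc, hMU⟩ := hlqc' U hU
  have hH' : (polarAnnihilator τ' M : Set G) ∈ @nhds G τ' 0 :=
    @BoundedGroup.polarAnnihilator_mem_nhds G _ τ' htg' hb M hM
  have hH : (polarAnnihilator τ' M : Set G) ∈ @nhds G τ 0 :=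
    @BoundedGroup.mem_nhds_zero_of_forall_isChar G _ τ inferInstance hb _ fun χ hχ =>
      (hcomp χ).mpr (@AddMonoidHom.continuous_of_ker_mem_nhds G _ τ' htg' _ _ _ _ χ
        (mem_of_superset hH' hχ))
  exact mem_of_superset hH (hMqc.polarAnnihilator_subset.trans hMU)

theorem stmt5 {G : Type*} [AddCommGroup G] (hb : BoundedGroup G) (τ : TopologicalSpace G)
    (htg : @IsTopologicalAddGroup G τ _) (hmet : @TopologicalSpace.MetrizableSpace G τ)
    (hlqc : LocallyQuasiConvex τ) :
    ∀ τ' : TopologicalSpace G, @IsTopologicalAddGroup G τ' _ → LocallyQuasiConvex τ' →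
      Compatible τ τ' → τ ≤ τ' :=
  stmt5_general hb τ htg hmet
end
end

section
/- Let (m_n) be a non-decreasing sequence of natural numbers with m_n → ∞, G = ⊕_n ℤ/m_nℤ ⊆ ∏_n ℤ/m_nℤ identified with finitely supported sequences (k_n/m_n + ℤ) in ℝ/ℤ, and let e_n ∈ G^ be the n-th coordinate character. Let τ_c be the topology on G of uniform convergence on the set c = {±e_n : n ∈ ℕ} ∪ {0}, with neighborhood basis V_m = {x ∈ G : |x_n| ≤ 1/(4m) for all n} for m ∈ ℕ. Then the continuous characters of (G, τ_c) are exactly the elements of ⊕_n Hom(ℤ/m_nℤ, ℝ/ℤ): no character with infinite support is τ_c-continuous. -/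
/-!
If `χ n ≠ 0` for infinitely many `n`, fix `M` and take `M` such indices with `m n ≥ 8M`. On each
of them a small multiple `a n` of `±1` lies in the `n`-th coordinate of `V_M` and is sent by `χ n`
to some `r n ∈ [1/(8M), 1/2]`; since the `r n` add up to at least `1/8`, a subfamily adds up to a
number in `[1/8, 1/2]`, and the corresponding element of `V_M` is sent at distance `≥ 1/8` from `0`.
Conversely, if `χ` has finite support `S`, then `V_M` with `4M > max_{n ∈ S} m n` forces `x n = 0`
for `n ∈ S`, so `χ` vanishes on a neighbourhood of `0`.
-/

open scoped Topology
open Filter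

noncomputable section

variable {G : Type*}

/-- The neighborhood `V_M` of `0` for the topology of uniform convergence on the
coordinate characters: all coordinates `x_n = k_n/m_n` satisfy `|k_n/m_n| ≤ 1/(4M)`,
where `k_n ∈ (-m_n/2, m_n/2]` is the minimal-absolute-value representative. -/
def Vset (m : ℕ → ℕ) (M : ℕ) : Set (Π₀ n, ZMod (m n)) :=
  {x | ∀ n, (|(x n).valMinAbs| : ℝ) / (m n) ≤ 1 / (4 * M)}

namespace AddCircle

theorem coe_norm_eq_or_eq_neg {p : ℝ} (u : AddCircle p) :
    (‖u‖ : AddCircle p) = u ∨ (‖u‖ : AddCircle p) = -u := by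
  induction u using QuotientAddGroup.induction_on with
  | H x =>
    have hx : ((x - round (p⁻¹ * x) * p : ℝ) : AddCircle p) = x := by
      rw [coe_sub, ← zsmul_eq_mul, coe_zsmul, coe_period, smul_zero, sub_zero]
    rw [norm_eq]
    rcases abs_choice (x - round (p⁻¹ * x) * p) with h | h
    · exact .inl (by rw [h, hx])
    · exact .inr (by rw [h, coe_neg, hx])

theorem le_mul_norm_of_nsmul_eq_zero {p : ℝ} [Fact (0 < p)] {u : AddCircle p} (hu : u ≠ 0)
    {k : ℕ} (hk : 0 < k) (hku : k • u = 0) : p ≤ k * ‖u‖ := by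
  have hfin : IsOfFinAddOrder u := isOfFinAddOrder_iff_nsmul_eq_zero.mpr ⟨k, hk, hku⟩
  have hord : (addOrderOf u : ℝ) ≤ k := by
    exact_mod_cast Nat.le_of_dvd hk (addOrderOf_dvd_of_nsmul_eq_zero hku)
  calc p ≤ addOrderOf u • ‖u‖ := le_add_order_smul_norm_of_isOfFinAddOrder hfin hu
    _ ≤ k * ‖u‖ := by rw [nsmul_eq_mul]; gcongr

end AddCircle

theorem exists_nat_le_and_mul_mem_Icc {x ε k : ℝ} (hx : 0 < x) (hx2 : x ≤ 1 / 2)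
    (hkx : 1 ≤ k * x) (hε : 0 < ε) (hε4 : ε ≤ 1 / 4) (hεk : 1 ≤ 2 * ε * k) :
    ∃ t : ℕ, (t : ℝ) ≤ 2 * ε * k ∧ (t : ℝ) * x ∈ Set.Icc ε (1 / 2) := by
  have hxk : 1 / x ≤ k := by rw [div_le_iff₀ hx]; exact hkx
  rcases le_or_gt x ε with hxε | hεx
  · have ht : (⌈ε / x⌉₊ : ℝ) < ε / x + 1 := Nat.ceil_lt_add_one (by positivity)
    have hεx : ε / x * x = ε := div_mul_cancel₀ ε hx.ne'
    refine ⟨⌈ε / x⌉₊, ?_, (div_le_iff₀ hx).mp (Nat.le_ceil _), ?_⟩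
    · calc (⌈ε / x⌉₊ : ℝ) ≤ ε / x + ε / x := by linarith [(one_le_div₀ hx).mpr hxε]
        _ = 2 * ε * (1 / x) := by ring
        _ ≤ 2 * ε * k := by gcongr
    · nlinarith
  · exact ⟨1, by simpa using hεk, by simp only [Nat.cast_one, one_mul]; exact ⟨hεx.le, hx2⟩⟩

theorem Finset.exists_subset_sum_mem_Icc {ι : Type*} (T : Finset ι) {r : ι → ℝ} {c d : ℝ}
    (hc : 0 ≤ c) (hcd : 2 * c ≤ d) (hr : ∀ i ∈ T, r i ≤ d) (hT : c ≤ ∑ i ∈ T, r i) :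
    ∃ U ⊆ T, ∑ i ∈ U, r i ∈ Set.Icc c d := by
  classical
  induction T using Finset.strongInduction with
  | H T ih =>
    by_cases hTd : ∑ i ∈ T, r i ≤ d
    · exact ⟨T, subset_rfl, hT, hTd⟩
    obtain ⟨u, hu⟩ : T.Nonempty := Finset.nonempty_of_sum_ne_zero (f := r) (by intro h; linarith)
    by_cases hbig : ∃ i ∈ T, c ≤ r i
    · obtain ⟨i, hi, hci⟩ := hbig
      exact ⟨{i}, singleton_subset_iff.mpr hi, by simpa using ⟨hci, hr i hi⟩⟩
    simp only [not_exists, not_and, not_le] at hbig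
    have hsum : c ≤ ∑ i ∈ T.erase u, r i := by
      rw [Finset.sum_erase_eq_sub hu]; linarith [hbig u hu]
    obtain ⟨U, hU, hUsum⟩ := ih _ (erase_ssubset hu) (fun i hi => hr i (mem_of_mem_erase hi)) hsum
    exact ⟨U, hU.trans (erase_subset _ _), hUsum⟩

theorem DFinsupp.finsetSum_single_apply {ι : Type*} {β : ι → Type*} [DecidableEq ι]
    [∀ i, AddCommMonoid (β i)] (U : Finset ι) (a : ∀ i, β i) (i : ι) :
    (∑ n ∈ U, single n (a n)) i = if i ∈ U then a i else 0 := by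
  simp [finsetSum_apply, single_apply]

namespace ZMod

theorem addMonoidHom_apply_eq_val_nsmul {k : ℕ} [NeZero k] {A : Type*} [AddMonoid A]
    (ψ : ZMod k →+ A) (b : ZMod k) : ψ b = b.val • ψ 1 := by
  rw [← map_nsmul, nsmul_one, natCast_zmod_val]

theorem exists_abs_valMinAbs_div_le_and_apply_eq_coe {k : ℕ} (ψ : ZMod k →+ AddCircle (1 : ℝ))
    (hψ : ψ ≠ 0) {ε : ℝ} (hε : 0 < ε) (hε4 : ε ≤ 1 / 4) (hεk : 1 ≤ 2 * ε * k) :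
    ∃ (a : ZMod k) (r : ℝ), (|a.valMinAbs| : ℝ) / k ≤ 2 * ε ∧ r ∈ Set.Icc ε (1 / 2) ∧
      ψ a = r := by
  have hk : 0 < k := Nat.pos_of_ne_zero (by rintro rfl; norm_num at hεk)
  have : NeZero k := ⟨hk.ne'⟩
  have hψ1 : ψ 1 ≠ 0 := fun hψ1 => hψ (AddMonoidHom.ext fun b => by
    rw [addMonoidHom_apply_eq_val_nsmul, hψ1, smul_zero, AddMonoidHom.zero_apply])
  have hku : k • ψ 1 = 0 := by rw [← map_nsmul, nsmul_one, natCast_self, map_zero]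
  obtain ⟨t, htk, ht⟩ := exists_nat_le_and_mul_mem_Icc (norm_pos_iff.mpr hψ1)
    (by simpa using AddCircle.norm_le_half_period 1 (x := ψ 1) one_ne_zero)
    (AddCircle.le_mul_norm_of_nsmul_eq_zero hψ1 hk hku) hε hε4 hεk
  have htk2 : t ≤ k / 2 := by
    have : (t : ℝ) * 2 ≤ k := by nlinarith
    have : t * 2 ≤ k := by exact_mod_cast this
    omega
  obtain ⟨a, ha, hψa⟩ : ∃ a : ZMod k,
      a.valMinAbs.natAbs = t ∧ ψ a = t • ((‖ψ 1‖ : ℝ) : AddCircle (1 : ℝ)) := by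
    rcases AddCircle.coe_norm_eq_or_eq_neg (ψ 1) with h | h
    · exact ⟨t, by rw [valMinAbs_natCast_of_le_half htk2, Int.natAbs_natCast],
        by rw [h, ← nsmul_one, map_nsmul]⟩
    · exact ⟨-t, by
        rw [natAbs_valMinAbs_neg, valMinAbs_natCast_of_le_half htk2, Int.natAbs_natCast],
        by rw [h, map_neg, ← nsmul_one, map_nsmul, smul_neg]⟩
  refine ⟨a, t * ‖ψ 1‖, ?_, ht, by rw [hψa, ← AddCircle.coe_nsmul, nsmul_eq_mul]⟩
  rw [← Int.cast_abs, Int.abs_eq_natAbs, ha, Int.cast_natCast, div_le_iff₀ (by positivity)]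
  exact htk

theorem eq_zero_of_abs_valMinAbs_div_le {k M : ℕ} (hk : 0 < k) (hkM : k < 4 * M)
    {a : ZMod k} (ha : (|a.valMinAbs| : ℝ) / k ≤ 1 / (4 * M)) : a = 0 := by
  have hkM' : (k : ℝ) < 4 * M := by exact_mod_cast hkM
  rw [div_le_div_iff₀ (by exact_mod_cast hk) (by linarith), one_mul] at ha
  have h : |(a.valMinAbs : ℝ)| < 1 := by nlinarith [abs_nonneg (a.valMinAbs : ℝ)]
  rw [← Int.cast_abs, ← Int.cast_one, Int.cast_lt, Int.abs_lt_one_iff] at h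
  exact (valMinAbs_eq_zero a).mp h

end ZMod

section Vset

variable {m : ℕ → ℕ}

theorem sum_single_mem_Vset {M : ℕ} (U : Finset ℕ) (a : ∀ n, ZMod (m n))
    (ha : ∀ n ∈ U, (|(a n).valMinAbs| : ℝ) / m n ≤ 1 / (4 * M)) :
    ∑ n ∈ U, DFinsupp.single n (a n) ∈ Vset m M := by
  intro n
  rw [DFinsupp.finsetSum_single_apply]
  split_ifs with hn
  · exact ha n hn
  · rw [ZMod.valMinAbs_zero]; simp only [abs_zero, Int.cast_zero, zero_div]; positivity

theorem sumAddHom_eq_zero_of_mem_Vset (hpos : ∀ n, 0 < m n) (χ : ∀ n, ZMod (m n) →+ Circle1)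
    {M : ℕ} (hM : ∀ n, χ n ≠ 0 → m n < 4 * M) {x : Π₀ n, ZMod (m n)} (hx : x ∈ Vset m M) :
    DFinsupp.sumAddHom χ x = 0 := by
  rw [DFinsupp.sumAddHom_apply]
  refine Finset.sum_eq_zero fun n _ => ?_
  change χ n (x n) = 0
  by_cases hχ : χ n = 0
  · rw [hχ, AddMonoidHom.zero_apply]
  · rw [ZMod.eq_zero_of_abs_valMinAbs_div_le (hpos n) (hM n hχ) (hx n), map_zero]

theorem exists_mem_Vset_le_norm_sumAddHom (hten : Tendsto m atTop atTop)
    (χ : ∀ n, ZMod (m n) →+ Circle1) (hχ : {n | χ n ≠ 0}.Infinite) {M : ℕ} (hM : 0 < M) :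
    ∃ x ∈ Vset m M, 1 / 8 ≤ ‖DFinsupp.sumAddHom χ x‖ := by
  obtain ⟨N, hN⟩ := eventually_atTop.mp (hten.eventually_ge_atTop (8 * M))
  obtain ⟨T, hT, hTcard⟩ := (hχ.sdiff (Set.finite_Iio N)).exists_subset_card_eq M
  have hM1 : (1 : ℝ) ≤ M := by exact_mod_cast hM
  have hMR : (0 : ℝ) < M := by linarith
  have hsmall : ∀ n ∈ T, ∃ (a : ZMod (m n)) (r : ℝ),
      (|a.valMinAbs| : ℝ) / m n ≤ 2 * (1 / (8 * M)) ∧ r ∈ Set.Icc (1 / (8 * (M : ℝ))) (1 / 2) ∧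
        χ n a = r := by
    intro n hn
    have hmn : (8 * M : ℝ) ≤ m n := by exact_mod_cast hN n (not_lt.mp (hT hn).2)
    refine ZMod.exists_abs_valMinAbs_div_le_and_apply_eq_coe (χ n) (hT hn).1 (by positivity)
      ?_ ?_
    · rw [div_le_div_iff₀ (by positivity) (by norm_num)]; linarith
    · rw [show 2 * (1 / (8 * (M : ℝ))) * m n = m n / (4 * M) by ring, le_div_iff₀ (by positivity)]
      linarith
  choose! a r ha hr hχa using hsmall
  obtain ⟨U, hUT, hU⟩ := T.exists_subset_sum_mem_Icc (r := r) (c := 1 / 8) (d := 1 / 2)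
    (by norm_num) (by norm_num) (fun n hn => (hr n hn).2) <| by
      have := Finset.card_nsmul_le_sum T r _ (fun n hn => (hr n hn).1)
      rwa [hTcard, nsmul_eq_mul, mul_one_div, mul_comm, ← div_div, div_self hMR.ne'] at this
  refine ⟨∑ n ∈ U, DFinsupp.single n (a n),
    sum_single_mem_Vset U a fun n hn => (ha n (hUT hn)).trans_eq (by ring), ?_⟩
  have hχU : DFinsupp.sumAddHom χ (∑ n ∈ U, DFinsupp.single n (a n)) = (∑ n ∈ U, r n : ℝ) := by
    rw [map_sum]
    rw [Finset.sum_congr rfl fun n hn => by rw [DFinsupp.sumAddHom_single, hχa n (hUT hn)]]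
    exact (map_sum (QuotientAddGroup.mk' (AddSubgroup.zmultiples (1 : ℝ))) r U).symm
  have hU0 : 0 ≤ ∑ n ∈ U, r n := by linarith [hU.1]
  rw [hχU, (AddCircle.norm_coe_eq_abs_iff 1 one_ne_zero).mpr
    (by simpa [abs_of_nonneg hU0] using hU.2), abs_of_nonneg hU0]
  exact hU.1

end Vset

theorem stmt15_general (m : ℕ → ℕ) (hpos : ∀ n, 0 < m n)
    (hten : Filter.Tendsto m Filter.atTop Filter.atTop)
    (τc : TopologicalSpace (Π₀ n, ZMod (m n)))
    (htg : @IsTopologicalAddGroup (Π₀ n, ZMod (m n)) τc _)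
    (hbasis : (@nhds (Π₀ n, ZMod (m n)) τc 0).HasBasis (fun M : ℕ => 0 < M) (Vset m))
    (χ : ∀ n, ZMod (m n) →+ Circle1) :
    @Continuous (Π₀ n, ZMod (m n)) Circle1 τc _ (DFinsupp.sumAddHom χ) ↔
      {n | χ n ≠ 0}.Finite := by
  let := τc
  constructor
  · intro hcont
    by_contra hinf
    obtain ⟨M, hM, hVM⟩ := hbasis.mem_iff.mp <| hcont.tendsto' 0 0 (map_zero _) <|
      Metric.ball_mem_nhds (0 : Circle1) (by norm_num : (0 : ℝ) < 1 / 8)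
    obtain ⟨x, hx, hχx⟩ := exists_mem_Vset_le_norm_sumAddHom hten χ hinf hM
    exact (mem_ball_zero_iff.mp (hVM hx)).not_ge hχx
  · intro hfin
    refine continuous_of_tendsto_nhds_zero _ (tendsto_const_nhds.congr' ?_)
    refine hbasis.eventually_iff.mpr ⟨hfin.toFinset.sup m + 1, Nat.succ_pos _, fun x hx => ?_⟩
    refine (sumAddHom_eq_zero_of_mem_Vset hpos χ (fun n hn => ?_) hx).symm
    have := Finset.le_sup (f := m) (hfin.mem_toFinset.mpr hn)
    omega

theorem stmt15 (m : ℕ → ℕ) (hpos : ∀ n, 0 < m n) (hmono : Monotone m)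
    (hten : Filter.Tendsto m Filter.atTop Filter.atTop)
    (τc : TopologicalSpace (Π₀ n, ZMod (m n)))
    (htg : @IsTopologicalAddGroup (Π₀ n, ZMod (m n)) τc _)
    (hbasis : (@nhds (Π₀ n, ZMod (m n)) τc 0).HasBasis (fun M : ℕ => 0 < M) (Vset m))
    (χ : ∀ n, ZMod (m n) →+ Circle1) :
    @Continuous (Π₀ n, ZMod (m n)) Circle1 τc _ (DFinsupp.sumAddHom χ) ↔
      {n | χ n ≠ 0}.Finite :=
  stmt15_general m hpos hten τc htg hbasis χ
end
end
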